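/- Let F be a field of characteristic p > 3 and let g = ⊕_{t∈ℤ} g_t be a ℤ-graded Lie algebra over F. Suppose there are integers ℓ_1, ℓ_2 with ℓ_1·ℓ_2 ≥ 0 and (ℓ_1, ℓ_2) ≠ (0, 0), elements e_i ∈ g_{ℓ_i} and f_i ∈ g_{−ℓ_i} (i = 1, 2), an element h ≠ 0, and a scalar a ≠ 0 in F such that ⁅h, e_1⁆ = 2e_1, ⁅h, f_1⁆ = −2f_1, ⁅h, e_2⁆ = a·e_2, ⁅h, f_2⁆ = −a·f_2, and ⁅e_i, f_j⁆ = δ_{ij}·h for i, j ∈ {1, 2}. Then g is infinite-dimensional over F. -/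

import Mathlib

/-!
Call `(x, y)` a root pair for `h` with eigenvalue `c` if `⁅h, x⁆ = c x`, `⁅h, y⁆ = -c y` and
`⁅x, y⁆ = h`. Given two root pairs `(x₁, y₁)`, `(x₂, y₂)` for `h` with `⁅x₁, y₂⁆ = ⁅x₂, y₁⁆ = 0`,
put `u = (ad x₂)ᵏ x₁` and `v = (ad y₂)ᵏ y₁`. For `k ≥ 2`, sl₂-type computations show that
`⁅x₁, v⁆ = ⁅u, y₁⁆ = 0` and `⁅u, v⁆ = γₖ h`. So whenever `γₖ ≠ 0`, the pairs `(x₁, y₁)` and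
`(γₖ⁻¹ u, v)` are again orthogonal root pairs, of eigenvalues `c₁, c₁ + k c₂` and degrees
`l₁, l₁ + k l₂`. As `γ₂ = (2c₁ + c₂)(c₁ + 2c₂)` and `γ₃ = 3(c₁ + c₂)(2c₁ + c₂)(c₁ + 3c₂)`, in
characteristic `≠ 3` one of `k = 2, 3` applies, possibly after swapping the two pairs, and at least
doubles `l₁ + l₂`. Hence nonzero homogeneous components occur in unbounded degrees, which is
impossible in finite dimension.
-/

open LieAlgebra

section AdPow

variable {R L : Type*} [CommRing R] [LieRing L] [LieAlgebra R L]

lemma ad_pow_succ_apply (y z : L) (n : ℕ) :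
    (ad R L y ^ (n + 1)) z = ⁅y, (ad R L y ^ n) z⁆ := by
  rw [pow_succ', Module.End.mul_apply, ad_apply]

lemma lie_ad_pow_apply_of_lie_eq_smul {h y z : L} {b d : R} (hy : ⁅h, y⁆ = b • y)
    (hz : ⁅h, z⁆ = d • z) (n : ℕ) :
    ⁅h, (ad R L y ^ n) z⁆ = (d + n * b) • (ad R L y ^ n) z := by
  induction n with
  | zero => simpa using hz
  | succ n ih =>
    rw [ad_pow_succ_apply, leibniz_lie, hy, ih, smul_lie, lie_smul]
    push_cast
    module

def lowerCoeff (d b : R) (n : ℕ) : R := n * d + n.choose 2 * b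

lemma lie_ad_pow_succ_apply {h x y z : L} {b d : R} (hxy : ⁅x, y⁆ = h) (hy : ⁅h, y⁆ = b • y)
    (hz : ⁅h, z⁆ = d • z) (hxz : ⁅x, z⁆ = 0) (n : ℕ) :
    ⁅x, (ad R L y ^ (n + 1)) z⁆ = lowerCoeff d b (n + 1) • (ad R L y ^ n) z := by
  induction n with
  | zero => simp [leibniz_lie, hxy, hz, hxz, lowerCoeff]
  | succ n ih =>
    rw [ad_pow_succ_apply, leibniz_lie, hxy, ih, lie_smul, ← ad_pow_succ_apply,
      lie_ad_pow_apply_of_lie_eq_smul hy hz, ← add_smul]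
    congr 1
    simp only [lowerCoeff, Nat.choose_succ_succ, Nat.choose_one_right, Nat.choose_zero_right]
    push_cast
    ring

lemma lie_ad_pow_add_two_apply_eq_zero {x y z : L} {b : R} (hxy : ⁅x, y⁆ = 0)
    (hyxz : ⁅y, ⁅x, z⁆⁆ = b • y) (n : ℕ) : ⁅x, (ad R L y ^ (n + 2)) z⁆ = 0 := by
  have hcomm (w : L) : ⁅x, ⁅y, w⁆⁆ = ⁅y, ⁅x, w⁆⁆ := by
    rw [leibniz_lie, hxy, zero_lie, zero_add]
  induction n with
  | zero =>
    simp only [ad_pow_succ_apply, pow_zero, Module.End.one_apply, hcomm, hyxz, lie_smul,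
      lie_self, smul_zero]
  | succ n ih => rw [ad_pow_succ_apply, hcomm, ih, lie_zero]

end AdPow

section RootPairs

variable {R L : Type*} [CommRing R] [LieRing L] [LieAlgebra R L]

structure IsRootPair (h x y : L) (c : R) : Prop where
  lie_h_left : ⁅h, x⁆ = c • x
  lie_h_right : ⁅h, y⁆ = (-c) • y
  lie_left_right : ⁅x, y⁆ = h

lemma IsRootPair.left_ne_zero {h x y : L} {c : R} (hP : IsRootPair h x y c) (hh : h ≠ 0) :
    x ≠ 0 := by
  rintro rfl
  exact hh (by rw [← hP.lie_left_right, zero_lie])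

structure IsOrthogonalRootPairs (h x₁ y₁ x₂ y₂ : L) (c₁ c₂ : R) : Prop where
  pair₁ : IsRootPair h x₁ y₁ c₁
  pair₂ : IsRootPair h x₂ y₂ c₂
  lie_left₁_right₂ : ⁅x₁, y₂⁆ = 0
  lie_left₂_right₁ : ⁅x₂, y₁⁆ = 0

/-- With `uᵢ = (ad x₂)ⁱ x₁` and `vᵢ = (ad y₂)ⁱ y₁`, `⁅uᵢ, vᵢ₊₁⁆ = ladderPairingShift c₁ c₂ i • y₂`
and `⁅uᵢ, vᵢ⁆ = ladderPairing c₁ c₂ i • h`. -/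
def ladderPairingShift (c₁ c₂ : R) : ℕ → R
  | 0 => c₂
  | i + 1 => -lowerCoeff (-c₁) (-c₂) (i + 2) * ladderPairingShift c₁ c₂ i

def ladderPairing (c₁ c₂ : R) : ℕ → R
  | 0 => 1
  | i + 1 => ladderPairingShift c₁ c₂ i - lowerCoeff (-c₁) (-c₂) (i + 1) * ladderPairing c₁ c₂ i

namespace IsOrthogonalRootPairs

variable {h x₁ y₁ x₂ y₂ : L} {c₁ c₂ : R}

lemma swap (H : IsOrthogonalRootPairs h x₁ y₁ x₂ y₂ c₁ c₂) :
    IsOrthogonalRootPairs h x₂ y₂ x₁ y₁ c₂ c₁ :=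
  ⟨H.pair₂, H.pair₁, H.lie_left₂_right₁, H.lie_left₁_right₂⟩

lemma lie_right₂_h (H : IsOrthogonalRootPairs h x₁ y₁ x₂ y₂ c₁ c₂) : ⁅y₂, h⁆ = c₂ • y₂ := by
  rw [← lie_skew, H.pair₂.lie_h_right, neg_smul, neg_neg]

lemma lie_left₂_ad_pow_succ (H : IsOrthogonalRootPairs h x₁ y₁ x₂ y₂ c₁ c₂) (n : ℕ) :
    ⁅x₂, (ad R L y₂ ^ (n + 1)) y₁⁆ = lowerCoeff (-c₁) (-c₂) (n + 1) • (ad R L y₂ ^ n) y₁ :=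
  lie_ad_pow_succ_apply H.pair₂.lie_left_right H.pair₂.lie_h_right H.pair₁.lie_h_right
    H.lie_left₂_right₁ n

lemma lie_left₁_ad_pow_add_two (H : IsOrthogonalRootPairs h x₁ y₁ x₂ y₂ c₁ c₂) (n : ℕ) :
    ⁅x₁, (ad R L y₂ ^ (n + 2)) y₁⁆ = 0 :=
  lie_ad_pow_add_two_apply_eq_zero H.lie_left₁_right₂
    (by rw [H.pair₁.lie_left_right, H.lie_right₂_h]) n

lemma lie_right₁_ad_pow_add_two (H : IsOrthogonalRootPairs h x₁ y₁ x₂ y₂ c₁ c₂) (n : ℕ) :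
    ⁅y₁, (ad R L x₂ ^ (n + 2)) x₁⁆ = 0 :=
  lie_ad_pow_add_two_apply_eq_zero (by rw [← lie_skew, H.lie_left₂_right₁, neg_zero])
    (by rw [← lie_skew y₁, H.pair₁.lie_left_right, lie_neg, ← lie_skew, neg_neg,
      H.pair₂.lie_h_left]) n

lemma lie_ad_pow_ad_pow_add_two (H : IsOrthogonalRootPairs h x₁ y₁ x₂ y₂ c₁ c₂) (i m : ℕ) :
    ⁅(ad R L x₂ ^ i) x₁, (ad R L y₂ ^ (i + m + 2)) y₁⁆ = 0 := by
  induction i generalizing m with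
  | zero => simpa using H.lie_left₁_ad_pow_add_two m
  | succ i ih =>
    rw [ad_pow_succ_apply, lie_lie, show i + 1 + m + 2 = i + (m + 2) + 1 by omega,
      H.lie_left₂_ad_pow_succ, lie_smul, show i + (m + 2) + 1 = i + (m + 1) + 2 by omega, ih,
      show i + (m + 2) = i + m + 2 by omega, ih, lie_zero, smul_zero, sub_zero]

lemma lie_ad_pow_ad_pow_succ (H : IsOrthogonalRootPairs h x₁ y₁ x₂ y₂ c₁ c₂) (i : ℕ) :
    ⁅(ad R L x₂ ^ i) x₁, (ad R L y₂ ^ (i + 1)) y₁⁆ = ladderPairingShift c₁ c₂ i • y₂ := by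
  induction i with
  | zero =>
    simp only [pow_zero, Module.End.one_apply, zero_add, ad_pow_succ_apply, leibniz_lie,
      H.lie_left₁_right₂, zero_lie, H.pair₁.lie_left_right, H.lie_right₂_h, ladderPairingShift]
  | succ i ih =>
    rw [ad_pow_succ_apply, lie_lie, H.lie_ad_pow_ad_pow_add_two i 0, H.lie_left₂_ad_pow_succ,
      lie_smul, ih, lie_zero, zero_sub, smul_smul, ← neg_smul, ← neg_mul]
    rfl

lemma lie_ad_pow_ad_pow (H : IsOrthogonalRootPairs h x₁ y₁ x₂ y₂ c₁ c₂) (i : ℕ) :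
    ⁅(ad R L x₂ ^ i) x₁, (ad R L y₂ ^ i) y₁⁆ = ladderPairing c₁ c₂ i • h := by
  induction i with
  | zero => simp [H.pair₁.lie_left_right, ladderPairing]
  | succ i ih =>
    rw [ad_pow_succ_apply, lie_lie, H.lie_ad_pow_ad_pow_succ, lie_smul, H.pair₂.lie_left_right,
      H.lie_left₂_ad_pow_succ, lie_smul, ih, smul_smul, ← sub_smul]
    rfl

end IsOrthogonalRootPairs

end RootPairs

section Ladder

variable {F L : Type*} [Field F] [LieRing L] [LieAlgebra F L]

lemma ladderPairing_two (c₁ c₂ : F) :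
    ladderPairing c₁ c₂ 2 = (2 * c₁ + c₂) * (c₁ + 2 * c₂) := by
  simp only [ladderPairing, ladderPairingShift, lowerCoeff, Nat.choose, Nat.reduceAdd]
  push_cast
  ring

lemma ladderPairing_three (c₁ c₂ : F) :
    ladderPairing c₁ c₂ 3 = 3 * (c₁ + c₂) * (2 * c₁ + c₂) * (c₁ + 3 * c₂) := by
  simp only [ladderPairing, ladderPairingShift, lowerCoeff, Nat.choose, Nat.reduceAdd]
  push_cast
  ring

theorem IsOrthogonalRootPairs.ladder {h x₁ y₁ x₂ y₂ : L} {c₁ c₂ : F}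
    (H : IsOrthogonalRootPairs h x₁ y₁ x₂ y₂ c₁ c₂) {k : ℕ} (hk : 2 ≤ k)
    (hγ : ladderPairing c₁ c₂ k ≠ 0) :
    IsOrthogonalRootPairs h x₁ y₁ ((ladderPairing c₁ c₂ k)⁻¹ • (ad F L x₂ ^ k) x₁)
      ((ad F L y₂ ^ k) y₁) c₁ (c₁ + k * c₂) := by
  obtain ⟨n, rfl⟩ := Nat.exists_eq_add_of_le' hk
  refine ⟨H.pair₁, ⟨?_, ?_, ?_⟩, H.lie_left₁_ad_pow_add_two n, ?_⟩
  · rw [lie_smul, lie_ad_pow_apply_of_lie_eq_smul H.pair₂.lie_h_left H.pair₁.lie_h_left,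
      smul_comm]
  · rw [lie_ad_pow_apply_of_lie_eq_smul H.pair₂.lie_h_right H.pair₁.lie_h_right]
    congr 1
    ring
  · rw [smul_lie, H.lie_ad_pow_ad_pow, inv_smul_smul₀ hγ]
  · rw [smul_lie, ← lie_skew, H.lie_right₁_ad_pow_add_two, neg_zero, smul_zero]

end Ladder

section Graded

variable {F L : Type*} [Field F] [LieRing L] [LieAlgebra F L] {g : ℤ → Submodule F L}

lemma ad_pow_apply_mem (hg : ∀ i j : ℤ, ∀ x ∈ g i, ∀ y ∈ g j, ⁅x, y⁆ ∈ g (i + j))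
    {i j : ℤ} {x z : L} (hx : x ∈ g i) (hz : z ∈ g j) (n : ℕ) :
    (ad F L x ^ n) z ∈ g (j + n * i) := by
  induction n with
  | zero => simpa using hz
  | succ n ih =>
    rw [ad_pow_succ_apply, show j + ↑(n + 1) * i = i + (j + n * i) by push_cast; ring]
    exact hg _ _ _ hx _ ih

def HasRootPairs (g : ℤ → Submodule F L) (h : L) (l₁ l₂ : ℕ) (c₁ c₂ : F) : Prop :=
  c₁ ≠ 0 ∧ c₂ ≠ 0 ∧ ∃ x₁ y₁ x₂ y₂ : L, IsOrthogonalRootPairs h x₁ y₁ x₂ y₂ c₁ c₂ ∧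
    x₁ ∈ g l₁ ∧ y₁ ∈ g (-l₁) ∧ x₂ ∈ g l₂ ∧ y₂ ∈ g (-l₂)

namespace HasRootPairs

variable {h : L} {l₁ l₂ : ℕ} {c₁ c₂ : F}

lemma swap (H : HasRootPairs g h l₁ l₂ c₁ c₂) : HasRootPairs g h l₂ l₁ c₂ c₁ := by
  obtain ⟨hc₁, hc₂, x₁, y₁, x₂, y₂, H, hx₁, hy₁, hx₂, hy₂⟩ := H
  exact ⟨hc₂, hc₁, x₂, y₂, x₁, y₁, H.swap, hx₂, hy₂, hx₁, hy₁⟩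

lemma ladder (hg : ∀ i j : ℤ, ∀ x ∈ g i, ∀ y ∈ g j, ⁅x, y⁆ ∈ g (i + j))
    (H : HasRootPairs g h l₁ l₂ c₁ c₂) {k : ℕ} (hk : 2 ≤ k) (hγ : ladderPairing c₁ c₂ k ≠ 0)
    (hc : c₁ + k * c₂ ≠ 0) : HasRootPairs g h l₁ (l₁ + k * l₂) c₁ (c₁ + k * c₂) := by
  obtain ⟨hc₁, -, x₁, y₁, x₂, y₂, H, hx₁, hy₁, hx₂, hy₂⟩ := H
  refine ⟨hc₁, hc, x₁, y₁, _, _, H.ladder hk hγ, hx₁, hy₁, ?_, ?_⟩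
  · refine Submodule.smul_mem _ _ ?_
    simpa [add_comm] using ad_pow_apply_mem hg hx₂ hx₁ k
  · simpa [add_comm] using ad_pow_apply_mem hg hy₂ hy₁ k

lemma exists_two_mul_add_le (hg : ∀ i j : ℤ, ∀ x ∈ g i, ∀ y ∈ g j, ⁅x, y⁆ ∈ g (i + j))
    (h3 : (3 : F) ≠ 0) (H : HasRootPairs g h l₁ l₂ c₁ c₂) :
    ∃ l₁' l₂' c₁' c₂', 2 * (l₁ + l₂) ≤ l₁' + l₂' ∧ HasRootPairs g h l₁' l₂' c₁' c₂' := by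
  wlog hA : 2 * c₁ + c₂ ≠ 0 generalizing l₁ l₂ c₁ c₂
  · obtain ⟨l₁', l₂', c₁', c₂', hle, H'⟩ := this H.swap fun h0 ↦
      mul_ne_zero h3 H.1 (by linear_combination 2 * not_not.mp hA - h0)
    exact ⟨l₁', l₂', c₁', c₂', by omega, H'⟩
  by_cases hB : c₁ + 2 * c₂ = 0
  · have h₁ : c₁ + c₂ ≠ 0 := fun h0 ↦ H.2.1 (by linear_combination hB - h0)
    have h₃ : c₁ + 3 * c₂ ≠ 0 := fun h0 ↦ H.2.1 (by linear_combination h0 - hB)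
    refine ⟨_, _, _, _, ?_, H.ladder hg (k := 3) (by norm_num) ?_ (by rwa [Nat.cast_ofNat])⟩
    · omega
    · rw [ladderPairing_three]
      exact mul_ne_zero (mul_ne_zero (mul_ne_zero h3 h₁) hA) h₃
  · refine ⟨_, _, _, _, ?_, H.ladder hg (k := 2) le_rfl ?_ (by rwa [Nat.cast_ofNat])⟩
    · omega
    · rw [ladderPairing_two]
      exact mul_ne_zero hA hB

lemma exists_lt_add (hg : ∀ i j : ℤ, ∀ x ∈ g i, ∀ y ∈ g j, ⁅x, y⁆ ∈ g (i + j))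
    (h3 : (3 : F) ≠ 0) (H : HasRootPairs g h l₁ l₂ c₁ c₂) (hl : 0 < l₁ + l₂) (n : ℕ) :
    ∃ l₁' l₂' c₁' c₂', n < l₁' + l₂' ∧ HasRootPairs g h l₁' l₂' c₁' c₂' := by
  induction n with
  | zero => exact ⟨l₁, l₂, c₁, c₂, hl, H⟩
  | succ n ih =>
    obtain ⟨l₁', l₂', c₁', c₂', hlt, H'⟩ := ih
    obtain ⟨l₁'', l₂'', c₁'', c₂'', hle, H''⟩ := H'.exists_two_mul_add_le hg h3
    exact ⟨l₁'', l₂'', c₁'', c₂'', by omega, H''⟩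

lemma not_finiteDimensional (hg : ∀ i j : ℤ, ∀ x ∈ g i, ∀ y ∈ g j, ⁅x, y⁆ ∈ g (i + j))
    (hind : iSupIndep g) (h3 : (3 : F) ≠ 0) (hh : h ≠ 0) (H : HasRootPairs g h l₁ l₂ c₁ c₂)
    (hl : 0 < l₁ + l₂) : ¬ FiniteDimensional F L := by
  intro _
  obtain ⟨N, hN⟩ := (Submodule.finite_ne_bot_of_iSupIndep hind).bddAbove
  obtain ⟨l₁', l₂', c₁', c₂', hlt, -, -, x₁, y₁, x₂, y₂, H', hx₁, -, hx₂, -⟩ :=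
    H.exists_lt_add hg h3 hl (2 * N.toNat)
  have hN₁ : (l₁' : ℤ) ≤ N :=
    hN ((Submodule.ne_bot_iff _).mpr ⟨x₁, hx₁, H'.pair₁.left_ne_zero hh⟩)
  have hN₂ : (l₂' : ℤ) ≤ N :=
    hN ((Submodule.ne_bot_iff _).mpr ⟨x₂, hx₂, H'.pair₂.left_ne_zero hh⟩)
  omega

end HasRootPairs

end Graded

lemma CharP.natCast_ne_zero_of_pos_of_lt {R : Type*} [AddMonoidWithOne R] {p n : ℕ} [CharP R p]
    (hn : 0 < n) (hnp : n < p) : (n : R) ≠ 0 := fun h0 ↦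
  (Nat.le_of_dvd hn ((CharP.cast_eq_zero_iff R p n).mp h0)).not_gt hnp

/-- Theorem 3.9: a ℤ-graded Lie algebra over a field of characteristic `p > 3`
containing homogeneous elements `e₁ ∈ g ℓ₁`, `e₂ ∈ g ℓ₂`, `f₁ ∈ g (-ℓ₁)`,
`f₂ ∈ g (-ℓ₂)` with `ℓ₁ℓ₂ ≥ 0`, `(ℓ₁,ℓ₂) ≠ (0,0)`, an element `h ≠ 0` and a scalar
`a ≠ 0` satisfying the stated relations is infinite-dimensional. -/
theorem statement17 {F L : Type*} [Field F] [LieRing L] [LieAlgebra F L]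
    (p : ℕ) [CharP F p] (hp : 3 < p)
    (g : ℤ → Submodule F L)
    (hdirect : DirectSum.IsInternal g)
    (hgraded : ∀ i j : ℤ, ∀ x ∈ g i, ∀ y ∈ g j, ⁅x, y⁆ ∈ g (i + j))
    (l₁ l₂ : ℤ) (hl : 0 ≤ l₁ * l₂) (hl0 : ¬(l₁ = 0 ∧ l₂ = 0))
    (e₁ e₂ f₁ f₂ h : L) (a : F)
    (he₁ : e₁ ∈ g l₁) (he₂ : e₂ ∈ g l₂)
    (hf₁ : f₁ ∈ g (-l₁)) (hf₂ : f₂ ∈ g (-l₂))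
    (hh : h ≠ 0) (ha : a ≠ 0)
    (hhe₁ : ⁅h, e₁⁆ = (2 : F) • e₁) (hhf₁ : ⁅h, f₁⁆ = (-2 : F) • f₁)
    (hhe₂ : ⁅h, e₂⁆ = a • e₂) (hhf₂ : ⁅h, f₂⁆ = (-a) • f₂)
    (he₁f₁ : ⁅e₁, f₁⁆ = h) (he₂f₂ : ⁅e₂, f₂⁆ = h)
    (he₁f₂ : ⁅e₁, f₂⁆ = 0) (he₂f₁ : ⁅e₂, f₁⁆ = 0) :
    ¬ FiniteDimensional F L := by
  have h2 : (2 : F) ≠ 0 := by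
    exact_mod_cast CharP.natCast_ne_zero_of_pos_of_lt (R := F) two_pos (by omega : 2 < p)
  have h3 : (3 : F) ≠ 0 := by
    exact_mod_cast CharP.natCast_ne_zero_of_pos_of_lt (R := F) three_pos hp
  have H : IsOrthogonalRootPairs h e₁ f₁ e₂ f₂ (2 : F) a :=
    ⟨⟨hhe₁, hhf₁, he₁f₁⟩, ⟨hhe₂, hhf₂, he₂f₂⟩, he₁f₂, he₂f₁⟩
  have hind := hdirect.submodule_iSupIndep
  rcases Int.mul_nonneg_iff.mp hl with ⟨hl₁, hl₂⟩ | ⟨hl₁, hl₂⟩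
  · lift l₁ to ℕ using hl₁
    lift l₂ to ℕ using hl₂
    exact HasRootPairs.not_finiteDimensional hgraded hind h3 hh
      ⟨h2, ha, _, _, _, _, H, he₁, hf₁, he₂, hf₂⟩ (by omega)
  · -- reversing the grading makes both degrees nonnegative
    obtain ⟨n₁, rfl⟩ := Int.exists_eq_neg_ofNat hl₁
    obtain ⟨n₂, rfl⟩ := Int.exists_eq_neg_ofNat hl₂
    refine HasRootPairs.not_finiteDimensional (g := fun j ↦ g (-j)) (fun i j x hx y hy ↦ ?_)
      (hind.comp neg_injective) h3 hh ⟨h2, ha, _, _, _, _, H, he₁, hf₁, he₂, hf₂⟩ (by omega)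
    simpa only [neg_add] using hgraded _ _ x hx y hy
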